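/- arXiv:0908.3644 — 5 statements merged into one kernel-verified Lean document; each statement's English description precedes it below -/
import Mathlib

section
/- For positive integers K, P with 2K ≤ P, setting q = C(P-K, K)/C(P, K), we have 1 - exp(-K²/P) ≤ 1 - q ≤ K²/(P - K). -/
/-!
Writing `C(P-K, K) / C(P, K) = ∏_{i<K} (1 - K/(P-i))`, every factor lies between
`1 - K/(P-K) ≥ 0` and `1 - K/P ≤ exp(-K/P)`. The upper bound on `q` is then the product of the
exponentials, and the lower bound is Bernoulli's inequality applied to `(1 - K/(P-K))^K`.
-/

open Finset Nat

theorem Nat.cast_choose_div_cast_choose {𝕜 : Type*} [Field 𝕜] [CharZero 𝕜] (m n k : ℕ) :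
    (m.choose k : 𝕜) / n.choose k = ∏ i ∈ range k, ((m : 𝕜) - i) / (n - i) := by
  rw [cast_choose_eq_descPochhammer_div, cast_choose_eq_descPochhammer_div,
    div_div_div_cancel_right₀ (cast_ne_zero.2 k.factorial_ne_zero),
    descPochhammer_eval_eq_prod_range, descPochhammer_eval_eq_prod_range, prod_div_distrib]

section

variable {K P : ℕ}

lemma cast_choose_sub_div_cast_choose_eq_prod (h : 2 * K ≤ P) :
    ((P - K).choose K : ℝ) / P.choose K = ∏ i ∈ range K, (1 - K / (P - i : ℝ)) := by
  rw [Nat.cast_choose_div_cast_choose]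
  refine prod_congr rfl fun i hi => ?_
  have hiP : (i : ℝ) < P := by exact_mod_cast (by grind : i < P)
  rw [Nat.cast_sub (by omega), sub_right_comm, sub_div, div_self (by linarith)]

lemma div_cast_sub_mem_Icc {i : ℕ} (hi : i ≤ K) (hK : K < P) :
    (K / (P - i) : ℝ) ∈ Set.Icc (K / P : ℝ) (K / (P - K)) := by
  have hi : (i : ℝ) ≤ K := by exact_mod_cast hi
  have hK : (K : ℝ) < P := by exact_mod_cast hK
  have hi0 : (0 : ℝ) ≤ i := i.cast_nonneg
  exact ⟨div_le_div_of_nonneg_left (by positivity) (by linarith) (by linarith),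
    div_le_div_of_nonneg_left (by positivity) (by linarith) (by linarith)⟩

lemma div_cast_sub_le_one (h : 2 * K ≤ P) : (K / (P - K) : ℝ) ≤ 1 := by
  have h : (2 * K : ℝ) ≤ P := by exact_mod_cast h
  exact div_le_one_of_le₀ (by linarith) (by linarith)

lemma cast_choose_sub_div_cast_choose_le_exp (h : 2 * K ≤ P) :
    ((P - K).choose K : ℝ) / P.choose K ≤ Real.exp (-(K ^ 2 / P : ℝ)) := by
  rw [cast_choose_sub_div_cast_choose_eq_prod h]
  calc ∏ i ∈ range K, (1 - K / (P - i : ℝ))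
      ≤ ∏ i ∈ range K, Real.exp (-(K / P : ℝ)) := by
        refine prod_le_prod (fun i hi => ?_) fun i hi => ?_ <;>
          obtain ⟨hlo, hhi⟩ := div_cast_sub_mem_Icc (P := P) (mem_range.1 hi).le
            (by have := mem_range.1 hi; omega)
        · linarith [div_cast_sub_le_one h]
        · linarith [Real.one_sub_le_exp_neg (K / P : ℝ)]
    _ = Real.exp (-(K ^ 2 / P : ℝ)) := by
        rw [prod_const, card_range, ← Real.exp_nat_mul]
        ring_nf

lemma one_sub_sq_div_le_cast_choose_sub_div_cast_choose (h : 2 * K ≤ P) :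
    1 - (K ^ 2 / (P - K) : ℝ) ≤ ((P - K).choose K : ℝ) / P.choose K := by
  rw [cast_choose_sub_div_cast_choose_eq_prod h]
  have hle := div_cast_sub_le_one h
  calc 1 - (K ^ 2 / (P - K) : ℝ) = 1 + K * -(K / (P - K) : ℝ) := by ring
    _ ≤ (1 + -(K / (P - K) : ℝ)) ^ K := one_add_mul_le_pow (by linarith) K
    _ = ∏ i ∈ range K, (1 - K / (P - K : ℝ)) := by
        rw [prod_const, card_range, ← sub_eq_add_neg]
    _ ≤ ∏ i ∈ range K, (1 - K / (P - i : ℝ)) := by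
        refine prod_le_prod (fun i hi => ?_) fun i hi => ?_ <;>
          obtain ⟨hlo, hhi⟩ := div_cast_sub_mem_Icc (P := P) (mem_range.1 hi).le
            (by have := mem_range.1 hi; omega) <;>
          linarith

end

theorem stmt2_general (K P : ℕ) (h : 2 * K ≤ P)
    (q : ℝ) (hq : q = ((P - K).choose K : ℝ) / (P.choose K : ℝ)) :
    1 - Real.exp (-((K : ℝ) ^ 2 / (P : ℝ))) ≤ 1 - q ∧
      1 - q ≤ (K : ℝ) ^ 2 / ((P : ℝ) - (K : ℝ)) := by
  subst hq
  exact ⟨by linarith [cast_choose_sub_div_cast_choose_le_exp h],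
    by linarith [one_sub_sq_div_le_cast_choose_sub_div_cast_choose h]⟩

/-- For positive integers `K, P` with `2K ≤ P` and `q = C(P-K,K)/C(P,K)`,
`1 - exp(-K²/P) ≤ 1 - q ≤ K²/(P-K)`. -/
theorem stmt2 (K P : ℕ) (hK : 0 < K) (hP : 0 < P) (h : 2 * K ≤ P)
    (q : ℝ) (hq : q = ((P - K).choose K : ℝ) / (P.choose K : ℝ)) :
    1 - Real.exp (-((K : ℝ) ^ 2 / (P : ℝ))) ≤ 1 - q ∧
      1 - q ≤ (K : ℝ) ^ 2 / ((P : ℝ) - (K : ℝ)) :=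
  stmt2_general K P h q hq
end

section
/- Let P_n, K_n be sequences of positive integers with K_n ≤ P_n, and let q_n = C(P_n - K_n, K_n)/C(P_n, K_n) when 2K_n ≤ P_n (and q_n = 0 otherwise). Then lim_{n→∞} q_n = 1 if and only if lim_{n→∞} K_n²/P_n = 0, and under either condition 1 - q_n is asymptotically equivalent to K_n²/P_n, i.e., lim_{n→∞} (P_n/K_n²)·(1 - q_n) = 1. -/
/-!
Since `C(p-k,k)/C(p,k) = ∏_{i<k} (1 - k/(p-i))`, comparing each factor with the extreme ones gives
`(1 - k/(p-k))^k ≤ q ≤ (1 - k/p)^k`. Bernoulli's inequality on the left, and `1 - t ≤ e^{-t}`,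
`1 + kt ≤ e^{kt}` on the right, then put `(p/k²)(1 - q)` between `1/(1 + x)` and `1/(1 - x)` for
`x = k²/p < 1`; both bounds tend to `1` as `x → 0`, and `1 - q = x · (p/k²)(1 - q)`.
-/

open Filter Topology

noncomputable def disjointProb (p k : ℕ) : ℝ :=
  ((p - k).choose k : ℝ) / (p.choose k : ℝ)

lemma disjointProb_eq_zero {p k : ℕ} (h : p < 2 * k) : disjointProb p k = 0 := by
  simp [disjointProb, Nat.choose_eq_zero_of_lt (by omega : p - k < k)]

lemma disjointProb_eq_prod {p k : ℕ} (h : 2 * k ≤ p) :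
    disjointProb p k = ∏ i ∈ Finset.range k, (1 - (k : ℝ) / (p - i)) := by
  have hfac : (k.factorial : ℝ) ≠ 0 := by exact_mod_cast k.factorial_ne_zero
  rw [disjointProb, ← mul_div_mul_left _ _ hfac]
  norm_cast
  rw [← Nat.descFactorial_eq_factorial_mul_choose, ← Nat.descFactorial_eq_factorial_mul_choose,
    Nat.descFactorial_eq_prod_range, Nat.descFactorial_eq_prod_range]
  push_cast
  rw [← Finset.prod_div_distrib]
  refine Finset.prod_congr rfl fun i hi => ?_
  have hi : i < k := Finset.mem_range.mp hi
  have hpi : (0 : ℝ) < p - i := by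
    rw [sub_pos]; exact_mod_cast (by omega : i < p)
  rw [Nat.cast_sub (by omega), Nat.cast_sub (by omega), Nat.cast_sub (by omega)]
  field_simp
  ring

lemma one_sub_pow_le_inv_one_add_mul {t : ℝ} (h0 : 0 ≤ t) (h1 : t ≤ 1) (k : ℕ) :
    (1 - t) ^ k ≤ (1 + k * t)⁻¹ :=
  calc (1 - t) ^ k ≤ Real.exp (-t) ^ k :=
        pow_le_pow_left₀ (by linarith) (Real.one_sub_le_exp_neg t) k
    _ = (Real.exp (k * t))⁻¹ := by rw [← Real.exp_nat_mul, ← Real.exp_neg]; ring_nf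
    _ ≤ (1 + k * t)⁻¹ :=
        inv_anti₀ (by positivity) (by linarith [Real.add_one_le_exp (k * t)])

lemma disjointProb_le_pow {p k : ℕ} (h : 2 * k ≤ p) :
    disjointProb p k ≤ (1 - (k : ℝ) / p) ^ k := by
  rw [disjointProb_eq_prod h]
  refine (Finset.prod_le_prod (g := fun _ => 1 - (k : ℝ) / p) (fun i hi => ?_)
    (fun i hi => ?_)).trans_eq (by simp)
  all_goals
    have hi : i < k := Finset.mem_range.mp hi
    have hpi : (k : ℝ) ≤ p - i := by
      rw [le_sub_iff_add_le]; exact_mod_cast (by omega : k + i ≤ p)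
    have hk : (0 : ℝ) < k := by exact_mod_cast (by omega : 0 < k)
  · rw [sub_nonneg]; exact div_le_one_of_le₀ hpi (by linarith)
  · gcongr
    · linarith
    · exact sub_le_self _ (Nat.cast_nonneg i)

lemma pow_le_disjointProb {p k : ℕ} (h : 2 * k ≤ p) :
    (1 - (k : ℝ) / (p - k)) ^ k ≤ disjointProb p k := by
  rw [disjointProb_eq_prod h]
  have hkp : (k : ℝ) ≤ p - k := by
    rw [le_sub_iff_add_le]; exact_mod_cast (by omega : k + k ≤ p)
  refine Eq.trans_le (by simp) (Finset.prod_le_prod (f := fun _ => 1 - (k : ℝ) / (p - k))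
    (fun i hi => ?_) (fun i hi => ?_))
  · rw [sub_nonneg]; exact div_le_one_of_le₀ hkp (by linarith [Nat.cast_nonneg (α := ℝ) k])
  · have hi : (i : ℝ) < k := by exact_mod_cast Finset.mem_range.mp hi
    have : (0 : ℝ) < k := by linarith [Nat.cast_nonneg (α := ℝ) i]
    gcongr
    linarith

lemma disjointProb_le_inv_one_add {p k : ℕ} (h : 2 * k ≤ p) :
    disjointProb p k ≤ (1 + (k : ℝ) ^ 2 / p)⁻¹ := by
  have hkp : (k : ℝ) ≤ p := by exact_mod_cast (by omega : k ≤ p)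
  calc disjointProb p k ≤ (1 - (k : ℝ) / p) ^ k := disjointProb_le_pow h
    _ ≤ (1 + k * ((k : ℝ) / p))⁻¹ :=
        one_sub_pow_le_inv_one_add_mul (by positivity) (div_le_one_of_le₀ hkp (by positivity)) k
    _ = (1 + (k : ℝ) ^ 2 / p)⁻¹ := by ring

lemma one_sub_le_disjointProb {p k : ℕ} (h : 2 * k ≤ p) :
    1 - (k : ℝ) ^ 2 / (p - k) ≤ disjointProb p k := by
  have hkp : (k : ℝ) ≤ p - k := by
    rw [le_sub_iff_add_le]; exact_mod_cast (by omega : k + k ≤ p)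
  have hs : (k : ℝ) / (p - k) ≤ 1 :=
    div_le_one_of_le₀ hkp (by linarith [Nat.cast_nonneg (α := ℝ) k])
  calc 1 - (k : ℝ) ^ 2 / (p - k) = 1 + k * -(k / (p - k)) := by ring
    _ ≤ (1 + -(k / (p - k))) ^ k := one_add_mul_le_pow (by linarith) k
    _ = (1 - (k : ℝ) / (p - k)) ^ k := by ring
    _ ≤ disjointProb p k := pow_le_disjointProb h

lemma mul_one_sub_disjointProb_mem_Icc {p k : ℕ} (hk : 0 < k) (h : k ^ 2 < p) :
    (p : ℝ) / k ^ 2 * (1 - disjointProb p k) ∈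
      Set.Icc (1 + (k : ℝ) ^ 2 / p)⁻¹ (1 - (k : ℝ) ^ 2 / p)⁻¹ := by
  have h2k : 2 * k ≤ p := by nlinarith
  have hkp : (k : ℝ) ^ 2 < p := by exact_mod_cast h
  have hkk : (k : ℝ) ≤ k ^ 2 := by exact_mod_cast Nat.le_self_pow two_ne_zero k
  have hp : (0 : ℝ) < p := lt_of_le_of_lt (by positivity) hkp
  have hpk : (0 : ℝ) < p - k ^ 2 := sub_pos.2 hkp
  constructor
  · calc (1 + (k : ℝ) ^ 2 / p)⁻¹ = (p : ℝ) / k ^ 2 * (1 - (1 + (k : ℝ) ^ 2 / p)⁻¹) := by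
          field_simp; ring
      _ ≤ (p : ℝ) / k ^ 2 * (1 - disjointProb p k) := by
          gcongr; exact disjointProb_le_inv_one_add h2k
  · calc (p : ℝ) / k ^ 2 * (1 - disjointProb p k) ≤ (p : ℝ) / k ^ 2 * (k ^ 2 / (p - k)) := by
          gcongr; linarith [one_sub_le_disjointProb h2k]
      _ ≤ (p : ℝ) / k ^ 2 * (k ^ 2 / (p - k ^ 2)) := by gcongr
      _ = (1 - (k : ℝ) ^ 2 / p)⁻¹ := by
          field_simp

section Sequences

variable {K P : ℕ → ℕ}

lemma tendsto_mul_one_sub_disjointProb (hK : ∀ n, 0 < K n) (hKP : ∀ n, K n ≤ P n)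
    (hx : Tendsto (fun n => (K n : ℝ) ^ 2 / P n) atTop (𝓝 0)) :
    Tendsto (fun n => (P n : ℝ) / K n ^ 2 * (1 - disjointProb (P n) (K n))) atTop (𝓝 1) := by
  have hlt : ∀ᶠ n in atTop, K n ^ 2 < P n :=
    (hx.eventually (gt_mem_nhds one_pos)).mono fun n hn => by
      exact_mod_cast (div_lt_one (by exact_mod_cast (hK n).trans_le (hKP n))).1 hn
  have hlo : Tendsto (fun n => (1 + (K n : ℝ) ^ 2 / P n)⁻¹) atTop (𝓝 1) := by
    simpa using (hx.const_add 1).inv₀ (by norm_num)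
  have hhi : Tendsto (fun n => (1 - (K n : ℝ) ^ 2 / P n)⁻¹) atTop (𝓝 1) := by
    simpa using (hx.const_sub 1).inv₀ (by norm_num)
  exact tendsto_of_tendsto_of_tendsto_of_le_of_le' hlo hhi
    (hlt.mono fun n h => (mul_one_sub_disjointProb_mem_Icc (hK n) h).1)
    (hlt.mono fun n h => (mul_one_sub_disjointProb_mem_Icc (hK n) h).2)

lemma tendsto_sq_div_of_tendsto_disjointProb
    (hq : Tendsto (fun n => disjointProb (P n) (K n)) atTop (𝓝 1)) :
    Tendsto (fun n => (K n : ℝ) ^ 2 / P n) atTop (𝓝 0) := by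
  have hinv : Tendsto (fun n => (disjointProb (P n) (K n))⁻¹ - 1) atTop (𝓝 0) := by
    simpa using (hq.inv₀ one_ne_zero).sub_const 1
  refine squeeze_zero' (Eventually.of_forall fun n => by positivity) ?_ hinv
  filter_upwards [hq.eventually (lt_mem_nhds one_pos)] with n hpos
  have h2K : 2 * K n ≤ P n := by
    by_contra h
    exact hpos.ne' (disjointProb_eq_zero (not_le.1 h))
  have := (le_inv_comm₀ hpos (by positivity)).1 (disjointProb_le_inv_one_add h2K)
  linarith

lemma tendsto_disjointProb_of_tendsto_sq_div (hK : ∀ n, 0 < K n) (hKP : ∀ n, K n ≤ P n)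
    (hx : Tendsto (fun n => (K n : ℝ) ^ 2 / P n) atTop (𝓝 0)) :
    Tendsto (fun n => disjointProb (P n) (K n)) atTop (𝓝 1) := by
  have hprod := (hx.mul (tendsto_mul_one_sub_disjointProb hK hKP hx)).const_sub 1
  rw [zero_mul, sub_zero] at hprod
  refine hprod.congr fun n => ?_
  have hKn : (K n : ℝ) ≠ 0 := by exact_mod_cast (hK n).ne'
  have hPn : (P n : ℝ) ≠ 0 := by exact_mod_cast ((hK n).trans_le (hKP n)).ne'
  field_simp
  ring

end Sequences

/-- For sequences of positive integers `K_n ≤ P_n`, with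
`q_n = C(P_n-K_n, K_n)/C(P_n, K_n)` when `2K_n ≤ P_n` and `q_n = 0` otherwise:
`q_n → 1` iff `K_n²/P_n → 0`, and under either condition `(P_n/K_n²)(1-q_n) → 1`. -/
theorem stmt4 (K P : ℕ → ℕ) (hK : ∀ n, 0 < K n) (hKP : ∀ n, K n ≤ P n)
    (q : ℕ → ℝ)
    (hq : ∀ n, q n = if 2 * K n ≤ P n then
      ((P n - K n).choose (K n) : ℝ) / ((P n).choose (K n) : ℝ) else 0) :
    (Tendsto q atTop (nhds 1) ↔
      Tendsto (fun n => (K n : ℝ) ^ 2 / (P n : ℝ)) atTop (nhds 0)) ∧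
    (Tendsto q atTop (nhds 1) →
      Tendsto (fun n => ((P n : ℝ) / (K n : ℝ) ^ 2) * (1 - q n)) atTop (nhds 1)) := by
  obtain rfl : q = fun n => disjointProb (P n) (K n) := by
    funext n
    rw [hq n]
    split_ifs with h
    · rfl
    · exact (disjointProb_eq_zero (not_le.1 h)).symm
  refine ⟨⟨tendsto_sq_div_of_tendsto_disjointProb,
    tendsto_disjointProb_of_tendsto_sq_div hK hKP⟩, fun h => ?_⟩
  exact tendsto_mul_one_sub_disjointProb hK hKP (tendsto_sq_div_of_tendsto_disjointProb h)
end

section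
/- In the random key graph K(n; K, P) with 2K ≤ P, for any spanning tree T on a vertex subset {1,…,r} (2 ≤ r ≤ n), the probability that every edge of T is present in the random key graph equals (1 - q)^{r-1}, where q = C(P-K, K)/C(P, K). -/
open Finset

/-- A key ring: a `K`-element subset of the key pool `{1,…,P}`. -/
abbrev KeyRing (P K : ℕ) := {S : Finset (Fin P) // S.card = K}

open Classical in
/-- Probability of an event under independent uniform assignment of key rings
to `n` nodes. -/
noncomputable def pr (n P K : ℕ) (E : (Fin n → KeyRing P K) → Prop) : ℝ :=
  ((Finset.univ : Finset (Fin n → KeyRing P K)).filter (fun κ => E κ)).card /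
    (Fintype.card (Fin n → KeyRing P K) : ℝ)

/-- The random key graph: distinct nodes are adjacent iff their key rings intersect. -/
def rkg {n P K : ℕ} (κ : Fin n → KeyRing P K) : SimpleGraph (Fin n) where
  Adj i j := i ≠ j ∧ ((κ i).1 ∩ (κ j).1).Nonempty
  symm := ⟨fun i j ⟨h1, h2⟩ => ⟨h1.symm, by rwa [Finset.inter_comm]⟩⟩
  loopless := ⟨fun i ⟨h, _⟩ => h rfl⟩

/-!
Root the tree `T` at a vertex and send every other vertex `v` to a neighbour `p v` one step
closer to the root; the `r - 1` edges of `T` are then exactly the pairs `{v, p v}`. Remove a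
deepest non-root vertex `v`: no other constraint mentions `κ v`, so whatever the other key rings
are, `κ v` meets the fixed `K`-set `κ (p v)` for exactly `C(P, K) - C(P - K, K)` of the `C(P, K)`
possible rings. By induction the probability is a product of `r - 1` factors `1 - q`.
-/

open Function

section Counting

variable {V α : Type*} [Fintype V] [DecidableEq V] [Fintype α]

def updateEquiv (v : V) : (V → α) × α ≃ (V → α) × α where
  toFun x := (update x.1 v x.2, x.1 v)
  invFun y := (update y.1 v y.2, y.1 v)
  left_inv := by rintro ⟨f, a⟩; simp
  right_inv := by rintro ⟨f, a⟩; simp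

lemma card_filter_mul_card_eq_sum (P : (V → α) → Prop) [DecidablePred P] (v : V) :
    #{f | P f} * Fintype.card α = ∑ g : V → α, #{a | P (update g v a)} := by
  calc #{f | P f} * Fintype.card α = #{x : (V → α) × α | P x.1} := by
        rw [← card_univ, ← card_product, ← filter_product_left, univ_product_univ]
    _ = #{x : (V → α) × α | P (update x.1 v x.2)} :=
        card_equiv (updateEquiv v) (by simp [updateEquiv])
    _ = ∑ g : V → α, #{a | P (update g v a)} := by
        simp only [card_filter, Fintype.sum_prod_type]

lemma card_filter_rel_and_mul_card (R : α → α → Prop) [DecidableRel R] {c : ℕ}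
    (hc : ∀ b, #{a | R a b} = c) (Q : (V → α) → Prop) [DecidablePred Q] {v w : V}
    (hwv : w ≠ v) (hQ : ∀ f a, Q (update f v a) ↔ Q f) :
    #{f | R (f v) (f w) ∧ Q f} * Fintype.card α = c * #{f | Q f} := by
  rw [card_filter_mul_card_eq_sum _ v, card_filter, mul_sum]
  refine sum_congr rfl fun g _ => ?_
  simp only [update_self, update_of_ne hwv, hQ]
  by_cases hg : Q g <;> simp [hg, hc]

variable {W : Type*} [DecidableEq W]

lemma card_filter_forall_rel_mul_pow (R : α → α → Prop) [DecidableRel R] {c : ℕ}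
    (hc : ∀ b, #{a | R a b} = c) {e : W → V} (he : Injective e) (p : W → W) (ρ : W → ℕ)
    (s : Finset W) (hs : ∀ w ∈ s, ρ (p w) < ρ w) :
    #{f : V → α | ∀ w ∈ s, R (f (e w)) (f (e (p w)))} * Fintype.card α ^ #s
      = c ^ #s * Fintype.card α ^ Fintype.card V := by
  induction s using Finset.induction_on_max_value ρ with
  | empty => simp [card_univ]
  | insert a s ha hmax ih =>
    rw [forall_mem_insert] at hs
    -- `a` has maximal rank, so it is neither in `s` nor the parent of anything in `s`.
    have hQ (f : V → α) (x : α) :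
        (∀ w ∈ s, R (update f (e a) x (e w)) (update f (e a) x (e (p w))))
          ↔ ∀ w ∈ s, R (f (e w)) (f (e (p w))) := by
      refine forall₂_congr fun w hw => ?_
      have hpw : p w ≠ a := ne_of_apply_ne ρ ((hs.2 w hw).trans_le (hmax w hw)).ne
      rw [update_of_ne (he.ne (ne_of_mem_of_not_mem hw ha)), update_of_ne (he.ne hpw)]
    have hpa : e (p a) ≠ e a := he.ne (ne_of_apply_ne ρ hs.1.ne)
    simp only [forall_mem_insert, card_insert_of_notMem ha, pow_succ]
    rw [← mul_assoc, mul_right_comm, card_filter_rel_and_mul_card R hc _ hpa hQ, mul_assoc,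
      ih hs.2]
    ring

end Counting

namespace SimpleGraph
variable {V : Type*} {G : SimpleGraph V}

lemma Connected.exists_adj_dist_add_one (hG : G.Connected) {u v : V} (h : v ≠ u) :
    ∃ w, G.Adj v w ∧ G.dist u w + 1 = G.dist u v := by
  obtain ⟨q, hq⟩ := hG.exists_walk_length_eq_dist v u
  cases q with
  | nil => exact absurd rfl h
  | @cons _ w _ hadj q =>
    refine ⟨w, hadj, le_antisymm ?_ ?_⟩
    · rw [dist_comm (u := u), dist_comm (u := u), ← hq, Walk.length_cons]
      exact Nat.add_le_add_right (dist_le q) 1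
    · rw [← dist_eq_one_iff_adj.2 hadj.symm]
      exact hG.dist_triangle

def IsParentMap (G : SimpleGraph V) (root : V) (p : V → V) : Prop :=
  ∀ v ≠ root, G.Adj v (p v) ∧ G.dist root (p v) + 1 = G.dist root v

lemma Connected.exists_isParentMap (hG : G.Connected) (root : V) :
    ∃ p : V → V, G.IsParentMap root p := by
  classical
  exact ⟨fun v => if h : v = root then v else (hG.exists_adj_dist_add_one h).choose,
    fun v hv => by simpa [hv] using (hG.exists_adj_dist_add_one hv).choose_spec⟩

variable [Fintype V] [DecidableEq V] {root : V} {p : V → V}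

lemma IsTree.edgeFinset_eq_image_parent [Fintype G.edgeSet] (hG : G.IsTree)
    (hp : G.IsParentMap root p) :
    G.edgeFinset = (univ.erase root).image fun v => s(v, p v) := by
  have hinj : Set.InjOn (fun v => s(v, p v)) (univ.erase root : Finset V) := by
    intro a ha b hb hab
    rcases Sym2.eq_iff.1 hab with ⟨h, -⟩ | ⟨hab, hba⟩
    · exact h
    · have ha' := (hp a (ne_of_mem_erase ha)).2
      have hb' := (hp b (ne_of_mem_erase hb)).2
      rw [hba] at ha'
      rw [← hab] at hb'
      omega
  refine (eq_of_subset_of_card_le ?_ ?_).symm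
  · simp only [image_subset_iff, mem_erase, mem_edgeFinset, mem_edgeSet]
    exact fun v hv => (hp v hv.1).1
  · rw [card_image_of_injOn hinj, card_erase_of_mem (mem_univ _), card_univ,
      ← hG.card_edgeFinset, Nat.add_sub_cancel]

lemma IsTree.forall_adj_iff_forall_parent (hG : G.IsTree)
    (hp : G.IsParentMap root p)
    {S : V → V → Prop} (hS : ∀ i j, S i j → S j i) :
    (∀ i j, G.Adj i j → S i j) ↔ ∀ v ∈ univ.erase root, S v (p v) := by
  classical
  refine ⟨fun h v hv => h _ _ (hp v (ne_of_mem_erase hv)).1, fun h i j hij => ?_⟩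
  have hij : s(i, j) ∈ G.edgeFinset := mem_edgeFinset.2 hij
  rw [hG.edgeFinset_eq_image_parent hp] at hij
  obtain ⟨v, hv, he⟩ := mem_image.1 hij
  rcases Sym2.eq_iff.1 he with ⟨rfl, rfl⟩ | ⟨rfl, rfl⟩
  · exact h v hv
  · exact hS _ _ (h v hv)

end SimpleGraph

lemma card_keyRing (P K : ℕ) : Fintype.card (KeyRing P K) = P.choose K := by
  simp

lemma pr_eq_card_div {n P K : ℕ} (E : (Fin n → KeyRing P K) → Prop) [DecidablePred E] :
    pr n P K E = #{κ | E κ} / (P.choose K : ℝ) ^ n := by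
  rw [pr, filter_congr_decidable, Fintype.card_fun, card_keyRing, Fintype.card_fin, Nat.cast_pow]

lemma card_keyRing_disjoint {P K : ℕ} (A : Finset (Fin P)) :
    #{S : KeyRing P K | Disjoint S.1 A} = (P - #A).choose K := by
  have hA : P - #A = #Aᶜ := by rw [card_compl, Fintype.card_fin]
  rw [hA, ← card_powersetCard]
  refine card_bij (fun S _ => S.1) ?_ (fun _ _ _ _ => Subtype.ext) ?_
  · intro S hS
    rw [mem_filter] at hS
    exact mem_powersetCard.2 ⟨subset_compl_iff_disjoint_right.2 hS.2, S.2⟩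
  · intro B hB
    rw [mem_powersetCard] at hB
    refine ⟨⟨B, hB.2⟩, mem_filter.2 ⟨mem_univ _, ?_⟩, rfl⟩
    exact subset_compl_iff_disjoint_right.1 hB.1

lemma card_keyRing_inter_nonempty {P K : ℕ} (A : Finset (Fin P)) :
    #{S : KeyRing P K | (S.1 ∩ A).Nonempty} = P.choose K - (P - #A).choose K := by
  rw [← card_keyRing, ← card_keyRing_disjoint A, ← card_univ,
    ← card_filter_add_card_filter_not (s := univ) (fun S : KeyRing P K => Disjoint S.1 A)]
  simp [not_disjoint_iff_nonempty_inter]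

theorem stmt7_general (n P K r : ℕ) (h2K : 2 * K ≤ P)
    (hrn : r ≤ n)
    (T : SimpleGraph (Fin r)) (hT : T.IsTree) :
    pr n P K (fun κ => ∀ i j : Fin r, T.Adj i j →
        ((κ (Fin.castLE hrn i)).1 ∩ (κ (Fin.castLE hrn j)).1).Nonempty) =
      (1 - ((P - K).choose K : ℝ) / (P.choose K : ℝ)) ^ (r - 1) := by
  obtain ⟨root⟩ := hT.connected.nonempty
  obtain ⟨p, hp⟩ := hT.connected.exists_isParentMap root
  have hc (b : KeyRing P K) : #{a : KeyRing P K | (a.1 ∩ b.1).Nonempty}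
      = P.choose K - (P - K).choose K := by
    rw [card_keyRing_inter_nonempty, b.2]
  have hcount := card_filter_forall_rel_mul_pow _ hc (Fin.castLE_injective hrn) p (T.dist root)
    (univ.erase root) fun v hv => (hp v (ne_of_mem_erase hv)).2 ▸ Nat.lt_add_one _
  rw [filter_congr_decidable, card_erase_of_mem (mem_univ _), card_univ, Fintype.card_fin,
    Fintype.card_fin, card_keyRing] at hcount
  have hM : (P.choose K : ℝ) ≠ 0 := Nat.cast_ne_zero.2 (Nat.choose_pos (by omega)).ne'
  have hevent (κ : Fin n → KeyRing P K) := hT.forall_adj_iff_forall_parent hp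
    (S := fun i j => ((κ (Fin.castLE hrn i)).1 ∩ (κ (Fin.castLE hrn j)).1).Nonempty)
    fun i j h => by rwa [inter_comm]
  simp only [hevent]
  rw [pr_eq_card_div, one_sub_div hM,
    ← Nat.cast_sub (Nat.choose_le_choose K (Nat.sub_le P K)), div_pow,
    div_eq_div_iff (pow_ne_zero _ hM) (pow_ne_zero _ hM)]
  exact_mod_cast hcount

/-- The probability that a given spanning tree `T` on the vertices `{1,…,r}`
is present in the random key graph equals `(1-q)^(r-1)`, where
`q = C(P-K, K)/C(P, K)`. -/
theorem stmt7 (n P K r : ℕ) (hK : 0 < K) (h2K : 2 * K ≤ P)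
    (hr2 : 2 ≤ r) (hrn : r ≤ n)
    (T : SimpleGraph (Fin r)) (hT : T.IsTree) :
    pr n P K (fun κ => ∀ i j : Fin r, T.Adj i j →
        ((κ (Fin.castLE hrn i)).1 ∩ (κ (Fin.castLE hrn j)).1).Nonempty) =
      (1 - ((P - K).choose K : ℝ) / (P.choose K : ℝ)) ^ (r - 1) :=
  stmt7_general n P K r h2K hrn T hT
end

section
/- Let K_n, P_n be a scaling with K_n ≤ P_n and deviation function α_n defined by K_n²/P_n = (log n + α_n)/n. Suppose lim_{n→∞} α_n = ∞ and P_n ≥ σn for some σ > 0 and all large n. Define α*_n = min(α_n, log n), K*_n = √(P_n (log n + α*_n)/n), and K̃_n = ⌈K*_n⌉, P̃_n = P_n. Then K̃_n ≤ K_n, K̃_n ≥ 2 for all large n, and the deviation function α̃_n of the new scaling (defined by K̃_n²/P̃_n = (log n + α̃_n)/n) satisfies lim α̃_n = ∞ and α̃_n = o(n). -/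
open Filter Asymptotics

/-!
Write `L = log n`. Capping the deviation at `L` gives a real `K*_n` with deviation exactly
`α*_n = min(α_n, L)`; since the deviation `n k² / P - L` is increasing in `k ≥ 0`, the cap
lowers `K*_n` below `K_n`, so also `⌈K*_n⌉ ≤ K_n`, while rounding up can only raise the
deviation, so `α̃_n ≥ α*_n → ∞`. Conversely `(k + 1)² ≤ 2k² + 2` bounds the effect of
rounding: `α̃_n ≤ 2α*_n + L + 2n/P_n ≤ 3L + 2/σ`, which is `o(n)`. Finally
`K̃_n² ≥ σ(L + α̃_n) → ∞`, hence `K̃_n ≥ 2` eventually.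
-/

namespace Scaling

open Real

noncomputable def deviation (n : ℕ) (p k : ℝ) : ℝ := n * k ^ 2 / p - log n

variable {n : ℕ} {p k k' a σ : ℝ}

theorem deviation_add_log (n : ℕ) (p k : ℝ) : deviation n p k + log n = n * k ^ 2 / p :=
  sub_add_cancel _ _

theorem deviation_sqrt (hn : 0 < n) (hp : 0 < p) (ha : 0 ≤ log n + a) :
    deviation n p √(p * (log n + a) / n) = a := by
  have hn' : (0 : ℝ) < n := Nat.cast_pos.2 hn
  rw [deviation, sq_sqrt (by positivity)]
  field_simp
  ring

theorem deviation_le_deviation_iff (hn : 0 < n) (hp : 0 < p) (hk : 0 ≤ k) (hk' : 0 ≤ k') :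
    deviation n p k ≤ deviation n p k' ↔ k ≤ k' := by
  rw [deviation, deviation, sub_le_sub_iff_right, div_le_div_iff_of_pos_right hp,
    mul_le_mul_iff_right₀ (Nat.cast_pos.2 hn), pow_le_pow_iff_left₀ hk hk' two_ne_zero]

theorem deviation_le_of_le_add_one (hp : 0 < p) (hk' : 0 ≤ k') (h : k' ≤ k + 1) :
    deviation n p k' ≤ 2 * deviation n p k + log n + 2 * n / p := by
  have hsq : k' ^ 2 ≤ 2 * k ^ 2 + 2 := by nlinarith [sq_nonneg (k - 1)]
  calc deviation n p k' ≤ n * (2 * k ^ 2 + 2) / p - log n := by unfold deviation; gcongr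
    _ = 2 * deviation n p k + log n + 2 * n / p := by unfold deviation; ring

theorem mul_log_add_deviation_le_sq (hσ : 0 < σ) (hn : 0 < n) (hσp : σ * n ≤ p) :
    σ * (log n + deviation n p k) ≤ k ^ 2 := by
  have hp : 0 < p := (mul_pos hσ (Nat.cast_pos.2 hn)).trans_le hσp
  rw [add_comm, deviation_add_log, mul_div_assoc', div_le_iff₀ hp]
  nlinarith [sq_nonneg k]

section Rounding

variable (hn : 0 < n) (hp : 0 < p) (ha : 0 ≤ log n + a)
include hn hp ha

theorem natCeil_sqrt_le_of_le_deviation {k : ℕ} (h : a ≤ deviation n p k) :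
    ⌈√(p * (log n + a) / n)⌉₊ ≤ k := by
  refine Nat.ceil_le.2 <| (deviation_le_deviation_iff hn hp (sqrt_nonneg _) k.cast_nonneg).1 ?_
  rwa [deviation_sqrt hn hp ha]

theorem le_deviation_natCeil_sqrt : a ≤ deviation n p ⌈√(p * (log n + a) / n)⌉₊ := by
  have := (deviation_le_deviation_iff hn hp (sqrt_nonneg _) (Nat.cast_nonneg _)).2
    (Nat.le_ceil √(p * (log n + a) / n))
  rwa [deviation_sqrt hn hp ha] at this

theorem deviation_natCeil_sqrt_le :
    deviation n p ⌈√(p * (log n + a) / n)⌉₊ ≤ 2 * a + log n + 2 * n / p := by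
  have := deviation_le_of_le_add_one (n := n) hp (Nat.cast_nonneg _)
    (Nat.ceil_lt_add_one (sqrt_nonneg (p * (log n + a) / n))).le
  rwa [deviation_sqrt hn hp ha] at this

end Rounding

theorem log_add_min_deviation_log_nonneg (hp : 0 ≤ p) :
    0 ≤ log n + min (deviation n p k) (log n) := by
  rw [← min_add_add_left, add_comm, deviation_add_log]
  exact le_min (by positivity) (by positivity)

theorem two_le_of_le_deviation (hσ : 0 < σ) (hn : 0 < n) (hσp : σ * n ≤ p) {k : ℕ}
    (h : 4 / σ ≤ deviation n p k) : 2 ≤ k := by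
  have : (2 : ℝ) ^ 2 ≤ k ^ 2 :=
    calc (2 : ℝ) ^ 2 = σ * (4 / σ) := by field_simp; norm_num
      _ ≤ σ * (log n + deviation n p k) := by gcongr; linarith [log_natCast_nonneg n]
      _ ≤ k ^ 2 := mul_log_add_deviation_le_sq hσ hn hσp
  exact_mod_cast (pow_le_pow_iff_left₀ zero_le_two k.cast_nonneg two_ne_zero).1 this

theorem deviation_natCeil_sqrt_le_three_mul_log (hσ : 0 < σ) (hn : 0 < n) (hσp : σ * n ≤ p)
    (ha : 0 ≤ log n + a) (ha' : a ≤ log n) :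
    deviation n p ⌈√(p * (log n + a) / n)⌉₊ ≤ 3 * log n + 2 / σ := by
  have hp : 0 < p := (mul_pos hσ (Nat.cast_pos.2 hn)).trans_le hσp
  have hnp : 2 * n / p ≤ 2 / σ := by rw [div_le_div_iff₀ hp hσ]; linarith
  linarith [deviation_natCeil_sqrt_le hn hp ha]

end Scaling

open Scaling

theorem isLittleO_natCast_of_le_mul_log_add {u : ℕ → ℝ} {C D : ℝ}
    (h : ∀ᶠ n in atTop, 0 ≤ u n ∧ u n ≤ C * Real.log n + D) :
    u =o[atTop] (fun n => (n : ℝ)) := by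
  have hlog : (fun x => C * Real.log x + D) =o[atTop] id :=
    (Real.isLittleO_log_id_atTop.const_mul_left C).add (isLittleO_const_id_atTop D)
  refine IsBigO.trans_isLittleO ?_ (hlog.comp_tendsto tendsto_natCast_atTop_atTop)
  refine IsBigO.of_bound 1 (h.mono fun n ⟨h0, hle⟩ => ?_)
  simp only [Function.comp_apply, Real.norm_eq_abs, one_mul]
  rw [abs_of_nonneg h0, abs_of_nonneg (h0.trans hle)]
  exact hle

/-- Reduction to strongly admissible scalings: given a scaling `K_n ≤ P_n` with
deviation `α_n → ∞` and `P_n ≥ σn`, the modified scaling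
`K̃_n = ⌈√(P_n(log n + min(α_n, log n))/n)⌉` satisfies `K̃_n ≤ K_n`, `K̃_n ≥ 2`
eventually, and its deviation `α̃_n` satisfies `α̃_n → ∞` and `α̃_n = o(n)`. -/
theorem stmt15 (K P : ℕ → ℕ) (σ : ℝ) (hσ : 0 < σ)
    (hK : ∀ n, 0 < K n) (hKP : ∀ n, K n ≤ P n)
    (α : ℕ → ℝ) (hα : ∀ n : ℕ, α n = (n : ℝ) * (K n : ℝ) ^ 2 / (P n : ℝ) - Real.log n)
    (hαtop : Tendsto α atTop atTop)
    (hPσ : ∀ᶠ n : ℕ in atTop, σ * (n : ℝ) ≤ (P n : ℝ))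
    (αstar : ℕ → ℝ) (hαs : ∀ n, αstar n = min (α n) (Real.log n))
    (Kstar : ℕ → ℝ)
    (hKs : ∀ n, Kstar n = Real.sqrt ((P n : ℝ) * (Real.log n + αstar n) / (n : ℝ)))
    (Ktil : ℕ → ℕ) (hKt : ∀ n, Ktil n = ⌈Kstar n⌉₊)
    (αtil : ℕ → ℝ)
    (hαt : ∀ n : ℕ, αtil n = (n : ℝ) * (Ktil n : ℝ) ^ 2 / (P n : ℝ) - Real.log n) :
    (∀ n, 1 ≤ n → Ktil n ≤ K n) ∧
    (∀ᶠ n in atTop, 2 ≤ Ktil n) ∧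
    Tendsto αtil atTop atTop ∧
    (fun n => αtil n) =o[atTop] (fun n => (n : ℝ)) := by
  have hKtil (n : ℕ) : Ktil n = ⌈√(P n * (Real.log n + αstar n) / n)⌉₊ := by rw [hKt, hKs]
  have hP (n : ℕ) : 0 < (P n : ℝ) := Nat.cast_pos.2 ((hK n).trans_le (hKP n))
  have hαs_add (n : ℕ) : 0 ≤ Real.log n + αstar n := by
    rw [hαs, hα]
    exact log_add_min_deviation_log_nonneg (hP n).le
  have hαs_top : Tendsto αstar atTop atTop :=
    (tendsto_inf_atTop _ hαtop (Real.tendsto_log_atTop.comp tendsto_natCast_atTop_atTop)).congr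
      fun n => (hαs n).symm
  have hαtil_top : Tendsto αtil atTop atTop := by
    refine tendsto_atTop_mono' _ ?_ hαs_top
    filter_upwards [eventually_gt_atTop 0] with n hn
    rw [hαt, hKtil]
    exact le_deviation_natCeil_sqrt hn (hP n) (hαs_add n)
  refine ⟨fun n hn => ?_, ?_, hαtil_top, ?_⟩
  · rw [hKtil]
    exact natCeil_sqrt_le_of_le_deviation hn (hP n) (hαs_add n)
      ((hαs n).trans_le ((min_le_left _ _).trans_eq (hα n)))
  · filter_upwards [hPσ, eventually_gt_atTop 0, hαtil_top.eventually_ge_atTop (4 / σ)]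
      with n hσn hn h4
    exact two_le_of_le_deviation hσ hn hσn (h4.trans_eq (hαt n))
  · refine isLittleO_natCast_of_le_mul_log_add (C := 3) (D := 2 / σ) ?_
    filter_upwards [hPσ, eventually_gt_atTop 0, hαtil_top.eventually_ge_atTop 0]
      with n hσn hn h0
    rw [hαt, hKtil] at h0 ⊢
    exact ⟨h0, deviation_natCeil_sqrt_le_three_mul_log hσ hn hσn (hαs_add n)
      ((hαs n).trans_le (min_le_right _ _))⟩
end

section
/- Let K, P, n be positive integers with 2 ≤ K ≤ P and 2K ≤ P, and let K_1,…,K_r be i.i.d. uniformly random K-subsets of {1,…,P} with U_r = |K_1 ∪ ⋯ ∪ K_r|. Then for every μ ∈ (0, 1/2), Σ_{r = r_n+1}^{⌊n/2⌋} C(n, r)·P[U_r ≤ ⌊μP⌋]·exp(-(n-r)K²/P) ≤ (2 e^{-K²/(2P)})^n · (√μ · (e/μ)^μ)^P, where r_n = min(⌊P/K⌋ - 1, ⌊n/2⌋). -/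
open Finset

/-!
If the union of `r` key rings has at most `m = ⌊μP⌋` keys, every ring lies in one of the
`C(P,m) ≤ (eP/m)^m` sets of `m` keys, so a union bound gives
`P[U_r ≤ m] ≤ C(P,m) (C(m,K)/C(P,K))^r ≤ C(P,m) (m/P)^{rK}`.
For `r > r_n` we have `rK ≥ P/2`, so with `t = m/P ≤ μ` this is at most `(√t (e/t)^t)^P`,
and `t ↦ √t (e/t)^t` is increasing on `(0,1]`. Finally `n - r ≥ n/2` bounds each exponential
factor by `e^{-nK²/(2P)}`, and the binomial coefficients sum to at most `2^n`.
-/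

open Real

section KeyRingCounting

variable {P K : ℕ}

lemma card_filter_forall_subset (r : ℕ) (S : Finset (Fin P)) :
    #{κ : Fin r → KeyRing P K | ∀ i, (κ i).1 ⊆ S} = (#S).choose K ^ r := by
  have hring : #{T : KeyRing P K | T.1 ⊆ S} = (#S).choose K := by
    rw [← card_powersetCard K S]
    refine card_bij (fun T _ => T.1) (fun T hT => ?_) (fun _ _ _ _ h => Subtype.ext h)
      (fun U hU => ?_)
    · exact mem_powersetCard.2 ⟨(mem_filter.1 hT).2, T.2⟩
    · obtain ⟨hUS, hUK⟩ := mem_powersetCard.1 hU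
      exact ⟨⟨U, hUK⟩, by simpa using hUS, rfl⟩
  rw [← hring, ← Fintype.card_piFinset_const]
  congr 1
  ext κ
  simp [Fintype.mem_piFinset]

lemma card_filter_card_biUnion_le (r : ℕ) {m : ℕ} (hm : m ≤ P) :
    #{κ : Fin r → KeyRing P K | #(univ.biUnion fun i => (κ i).1) ≤ m} ≤
      P.choose m * m.choose K ^ r := by
  calc _ ≤ #((univ.powersetCard m).biUnion
          fun S => {κ : Fin r → KeyRing P K | ∀ i, (κ i).1 ⊆ S}) := by
        refine card_le_card fun κ hκ => ?_
        obtain ⟨S, hsub, hS⟩ :=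
          exists_superset_card_eq (mem_filter.1 hκ).2 (by simpa using hm)
        simp only [mem_biUnion, mem_powersetCard_univ, mem_filter, mem_univ, true_and]
        exact ⟨S, hS, fun i => (subset_biUnion_of_mem _ (mem_univ i)).trans hsub⟩
    _ ≤ ∑ S ∈ univ.powersetCard m, #{κ : Fin r → KeyRing P K | ∀ i, (κ i).1 ⊆ S} :=
        card_biUnion_le
    _ = P.choose m * m.choose K ^ r := by
        rw [sum_congr rfl fun S hS => by
            rw [card_filter_forall_subset, mem_powersetCard_univ.1 hS],
          sum_const, card_powersetCard, card_univ, Fintype.card_fin, smul_eq_mul]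

lemma pr_card_biUnion_le (r : ℕ) {m : ℕ} (hm : m ≤ P) :
    pr r P K (fun κ => #(univ.biUnion fun i => (κ i).1) ≤ m) ≤
      P.choose m * ((m.choose K : ℝ) / P.choose K) ^ r := by
  have hcard : Fintype.card (Fin r → KeyRing P K) = P.choose K ^ r := by simp
  rw [pr, hcard, div_pow, mul_div_assoc']
  push_cast
  gcongr
  norm_cast
  convert card_filter_card_biUnion_le (K := K) r hm

end KeyRingCounting

lemma descFactorial_mul_pow_le {m n : ℕ} (hmn : m ≤ n) (k : ℕ) :
    m.descFactorial k * n ^ k ≤ n.descFactorial k * m ^ k := by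
  rw [Nat.descFactorial_eq_prod_range, Nat.descFactorial_eq_prod_range, pow_eq_prod_const n,
    pow_eq_prod_const m, ← prod_mul_distrib, ← prod_mul_distrib]
  refine prod_le_prod' fun i _ => ?_
  rw [Nat.sub_mul, Nat.sub_mul, mul_comm n m]
  exact Nat.sub_le_sub_left (Nat.mul_le_mul_left i hmn) _

lemma choose_mul_pow_le {m n : ℕ} (hmn : m ≤ n) (k : ℕ) :
    m.choose k * n ^ k ≤ n.choose k * m ^ k := by
  refine Nat.le_of_mul_le_mul_left ?_ k.factorial_pos
  simpa only [← mul_assoc, ← Nat.descFactorial_eq_factorial_mul_choose]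
    using descFactorial_mul_pow_le hmn k

lemma choose_div_choose_le_div_pow {m n : ℕ} (hmn : m ≤ n) (hn : 0 < n) (k : ℕ) :
    (m.choose k : ℝ) / n.choose k ≤ ((m : ℝ) / n) ^ k := by
  rcases (n.choose k).eq_zero_or_pos with h | h
  · rw [h, Nat.cast_zero, div_zero]
    positivity
  rw [div_le_iff₀ (by exact_mod_cast h), div_pow, div_mul_eq_mul_div,
    le_div_iff₀ (by positivity)]
  exact_mod_cast (choose_mul_pow_le hmn k).trans_eq (mul_comm _ _)

lemma choose_le_exp_one_mul_div_pow (P : ℕ) {m : ℕ} (hm : 0 < m) :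
    (P.choose m : ℝ) ≤ (exp 1 * P / m) ^ m := by
  have hm' : (m : ℝ) ≠ 0 := by positivity
  calc (P.choose m : ℝ) ≤ (P : ℝ) ^ m / m.factorial := Nat.choose_le_pow_div m P
    _ = ((P : ℝ) / m) ^ m * ((m : ℝ) ^ m / m.factorial) := by
        rw [div_pow, mul_div_assoc', div_mul_cancel₀ _ (pow_ne_zero m hm')]
    _ ≤ ((P : ℝ) / m) ^ m * exp m := by
        gcongr
        exact pow_div_factorial_le_exp _ (Nat.cast_nonneg m) m
    _ = (exp 1 * P / m) ^ m := by rw [← exp_one_pow, ← mul_pow, mul_div_assoc, mul_comm]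

lemma monotoneOn_self_sub_mul_log : MonotoneOn (fun x : ℝ => x - x * log x) (Set.Ioc 0 1) := by
  intro a ha b hb hab
  have hlog : (b - a) * log b ≤ 0 :=
    mul_nonpos_of_nonneg_of_nonpos (by linarith) (log_nonpos hb.1.le hb.2)
  have hratio : a * (log b - log a) ≤ b - a := by
    rw [← log_div hb.1.ne' ha.1.ne']
    calc a * log (b / a) ≤ a * (b / a - 1) :=
          mul_le_mul_of_nonneg_left (log_le_sub_one_of_pos (div_pos hb.1 ha.1)) ha.1.le
      _ = b - a := by rw [mul_sub, mul_div_cancel₀ _ ha.1.ne', mul_one]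
  linear_combination hlog + hratio

lemma monotoneOn_sqrt_mul_exp_one_div_rpow :
    MonotoneOn (fun x : ℝ => √x * (exp 1 / x) ^ x) (Set.Ioc 0 1) := by
  have hexp : ∀ x : ℝ, 0 < x → (exp 1 / x) ^ x = exp (x - x * log x) := fun x hx => by
    rw [rpow_def_of_pos (by positivity), log_div (exp_ne_zero 1) hx.ne', log_exp]
    ring_nf
  intro a ha b hb hab
  simp only [hexp a ha.1, hexp b hb.1]
  exact mul_le_mul (sqrt_le_sqrt hab) (exp_le_exp.2 (monotoneOn_self_sub_mul_log ha hb hab))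
    (exp_pos _).le (sqrt_nonneg b)

lemma choose_mul_div_pow_le {P m N : ℕ} (hm : 0 < m) (hmP : m ≤ P) (hPN : P ≤ 2 * N) :
    (P.choose m : ℝ) * ((m : ℝ) / P) ^ N ≤
      (√((m : ℝ) / P) * (exp 1 / ((m : ℝ) / P)) ^ ((m : ℝ) / P)) ^ P := by
  have hP : (0 : ℝ) < P := by exact_mod_cast hm.trans_le hmP
  set t : ℝ := m / P with ht
  have ht0 : 0 < t := by positivity
  have ht1 : t ≤ 1 := div_le_one_of_le₀ (by exact_mod_cast hmP) hP.le
  have hchoose : (P.choose m : ℝ) ≤ ((exp 1 / t) ^ t) ^ P := by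
    rw [← rpow_mul_natCast (by positivity), ht, div_mul_cancel₀ _ hP.ne', rpow_natCast,
      div_div_eq_mul_div]
    exact choose_le_exp_one_mul_div_pow P hm
  -- `P` may be odd, so compare `t ^ N = √t ^ (2N)` with `√t ^ P`.
  have hpow : t ^ N ≤ √t ^ P := by
    calc t ^ N = √t ^ (2 * N) := by rw [pow_mul, sq_sqrt ht0.le]
      _ ≤ √t ^ P := pow_le_pow_of_le_one (sqrt_nonneg t) (sqrt_le_one.2 ht1) hPN
  calc (P.choose m : ℝ) * t ^ N ≤ ((exp 1 / t) ^ t) ^ P * √t ^ P := by gcongr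
    _ = (√t * (exp 1 / t) ^ t) ^ P := by rw [← mul_pow, mul_comm]

lemma pr_card_biUnion_le_floor {r P K : ℕ} (hK : K ≠ 0) (hr : r ≠ 0) (hPr : P ≤ 2 * (K * r))
    {μ : ℝ} (hμ0 : 0 < μ) (hμ1 : μ ≤ 1) :
    pr r P K (fun κ => #(univ.biUnion fun i => (κ i).1) ≤ ⌊μ * (P : ℝ)⌋₊) ≤
      (√μ * (exp 1 / μ) ^ μ) ^ P := by
  set m := ⌊μ * (P : ℝ)⌋₊
  have hmP : m ≤ P := Nat.floor_le_of_le (mul_le_of_le_one_left (Nat.cast_nonneg P) hμ1)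
  refine (pr_card_biUnion_le r hmP).trans ?_
  rcases m.eq_zero_or_pos with hm0 | hm0
  · rw [hm0, Nat.choose_eq_zero_of_lt (Nat.pos_of_ne_zero hK), Nat.cast_zero, zero_div,
      zero_pow hr, mul_zero]
    positivity
  have hP : 0 < P := hm0.trans_le hmP
  have hmμ : (m : ℝ) / P ≤ μ :=
    div_le_of_le_mul₀ (Nat.cast_nonneg P) hμ0.le (Nat.floor_le (by positivity))
  calc (P.choose m : ℝ) * ((m.choose K : ℝ) / P.choose K) ^ r
      ≤ P.choose m * ((m : ℝ) / P) ^ (K * r) := by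
        rw [pow_mul]
        gcongr
        exact choose_div_choose_le_div_pow hmP hP K
    _ ≤ (√((m : ℝ) / P) * (exp 1 / ((m : ℝ) / P)) ^ ((m : ℝ) / P)) ^ P :=
        choose_mul_div_pow_le hm0 hmP hPr
    _ ≤ (√μ * (exp 1 / μ) ^ μ) ^ P :=
        pow_le_pow_left₀ (by positivity) (monotoneOn_sqrt_mul_exp_one_div_rpow
          ⟨by positivity, hmμ.trans hμ1⟩ ⟨hμ0, hμ1⟩ hmμ) P

lemma exp_neg_sub_mul_div_le {n r : ℕ} (hr : r ≤ n / 2) {a b : ℝ} (ha : 0 ≤ a) (hb : 0 ≤ b) :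
    exp (-(((n : ℝ) - r) * a / b)) ≤ exp (-(a / (2 * b))) ^ n := by
  have hr' : (r : ℝ) ≤ n / 2 := by
    rw [le_div_iff₀ two_pos]
    exact_mod_cast (Nat.le_div_iff_mul_le two_pos).1 hr
  have hab : 0 ≤ a / b := div_nonneg ha hb
  rw [← exp_nat_mul, exp_le_exp]
  calc -(((n : ℝ) - r) * a / b) = -(((n : ℝ) - r) * (a / b)) := by ring
    _ ≤ -((n : ℝ) / 2 * (a / b)) := by gcongr; linarith
    _ = n * -(a / (2 * b)) := by ring

lemma sum_choose_le_two_pow {n : ℕ} {s : Finset ℕ} (hs : ∀ r ∈ s, r ≤ n) :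
    ∑ r ∈ s, (n.choose r : ℝ) ≤ 2 ^ n := by
  calc ∑ r ∈ s, (n.choose r : ℝ) ≤ ∑ r ∈ range (n + 1), (n.choose r : ℝ) :=
        sum_le_sum_of_subset_of_nonneg (fun r hr => mem_range_succ_iff.2 (hs r hr))
          fun _ _ _ => by positivity
    _ = 2 ^ n := by exact_mod_cast Nat.sum_range_choose n

theorem stmt17_general (n P K : ℕ) (hK : 2 ≤ K)
    (μ : ℝ) (hμ0 : 0 < μ) (hμ2 : μ < 1 / 2) :
    ∑ r ∈ Finset.Icc (min (P / K - 1) (n / 2) + 1) (n / 2),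
        (n.choose r : ℝ) *
          pr r P K (fun κ =>
            ((Finset.univ.biUnion (fun i => (κ i).1)).card ≤ ⌊μ * (P : ℝ)⌋₊)) *
          Real.exp (-(((n : ℝ) - (r : ℝ)) * (K : ℝ) ^ 2 / (P : ℝ))) ≤
      (2 * Real.exp (-((K : ℝ) ^ 2 / (2 * (P : ℝ))))) ^ n *
        (Real.sqrt μ * (Real.exp 1 / μ) ^ μ) ^ P := by
  set B := (√μ * (exp 1 / μ) ^ μ) ^ P
  set E := exp (-((K : ℝ) ^ 2 / (2 * (P : ℝ))))
  have hterm : ∀ r ∈ Icc (min (P / K - 1) (n / 2) + 1) (n / 2),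
      (n.choose r : ℝ) * pr r P K (fun κ => #(univ.biUnion fun i => (κ i).1) ≤ ⌊μ * (P : ℝ)⌋₊) *
          exp (-(((n : ℝ) - r) * (K : ℝ) ^ 2 / P)) ≤ n.choose r * (B * E ^ n) := by
    intro r hr
    obtain ⟨hr1, hr2⟩ := mem_Icc.1 hr
    have hPr : P ≤ 2 * (K * r) :=
      calc P ≤ K * (P / K + 1) := (Nat.lt_mul_div_succ P (by omega)).le
        _ ≤ K * (r + r) := Nat.mul_le_mul_left K (by omega)
        _ = 2 * (K * r) := by ring
    rw [mul_assoc]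
    gcongr
    · exact pr_card_biUnion_le_floor (by omega) (by omega) hPr hμ0 (by linarith)
    · exact exp_neg_sub_mul_div_le hr2 (by positivity) (Nat.cast_nonneg P)
  calc _ ≤ ∑ r ∈ Icc (min (P / K - 1) (n / 2) + 1) (n / 2), (n.choose r : ℝ) * (B * E ^ n) :=
        sum_le_sum hterm
    _ ≤ 2 ^ n * (B * E ^ n) := by
        rw [← sum_mul]
        gcongr
        exact sum_choose_le_two_pow fun r hr => (mem_Icc.1 hr).2.trans (Nat.div_le_self n 2)
    _ = (2 * E) ^ n * B := by ring

/-- Bound on the tail of the union-bound sum over large `r`: for `μ ∈ (0,1/2)`,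
`Σ_{r=r_n+1}^{⌊n/2⌋} C(n,r)·P[U_r ≤ ⌊μP⌋]·e^{-(n-r)K²/P}
  ≤ (2e^{-K²/(2P)})^n (√μ (e/μ)^μ)^P`, where `r_n = min(⌊P/K⌋-1, ⌊n/2⌋)`. -/
theorem stmt17 (n P K : ℕ) (hK : 2 ≤ K) (hKP : K ≤ P) (h2K : 2 * K ≤ P) (hn : 2 ≤ n)
    (μ : ℝ) (hμ0 : 0 < μ) (hμ2 : μ < 1 / 2) :
    ∑ r ∈ Finset.Icc (min (P / K - 1) (n / 2) + 1) (n / 2),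
        (n.choose r : ℝ) *
          pr r P K (fun κ =>
            ((Finset.univ.biUnion (fun i => (κ i).1)).card ≤ ⌊μ * (P : ℝ)⌋₊)) *
          Real.exp (-(((n : ℝ) - (r : ℝ)) * (K : ℝ) ^ 2 / (P : ℝ))) ≤
      (2 * Real.exp (-((K : ℝ) ^ 2 / (2 * (P : ℝ))))) ^ n *
        (Real.sqrt μ * (Real.exp 1 / μ) ^ μ) ^ P :=
  stmt17_general n P K hK μ hμ0 hμ2
end
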